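/- Let G be a finite group, χ an irreducible complex character of G, and K a conjugacy class of G with representative x_K. Then the complex number |K| · χ(x_K) / χ(1) is an algebraic integer (i.e., integral over ℤ). -/

import Mathlib

/-!
The class sum `T = ∑_{h ∈ K} ρ(h)` is the image of an element of the group ring `ℤ[G]`, which is a
finitely generated `ℤ`-module, so `T` is integral over `ℤ`. It commutes with every `ρ(s)`, so by
Schur's lemma it acts on the irreducible representation as a scalar `c`, which is then integral
as well. Taking traces, `c · χ(1) = |K| · χ(g)`.
-/

open Finset CategoryTheory

def IsIrredChar (G : Type) [Monoid G] (χ : G → ℂ) : Prop :=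
  ∃ V : FDRep ℂ G, CategoryTheory.Simple V ∧ χ = FDRep.character V

theorem MonoidHom.isIntegral_sum {G A : Type*} [Monoid G] [Finite G] [Ring A] (ρ : G →* A)
    (s : Finset G) : IsIntegral ℤ (∑ g ∈ s, ρ g) := by
  have hint : IsIntegral ℤ (∑ g ∈ s, MonoidAlgebra.single g (1 : ℤ)) :=
    Algebra.IsIntegral.isIntegral _
  simpa only [map_sum, MonoidAlgebra.lift_single, one_smul] using
    hint.map (MonoidAlgebra.lift ℤ A G ρ)

theorem MonoidHom.commute_sum_filter_isConj {G A : Type*} [Group G] [Fintype G] [Semiring A]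
    (ρ : G →* A) (g : G) [DecidablePred (IsConj g)] (s : G) :
    Commute (ρ s) (∑ h ∈ univ.filter (IsConj g), ρ h) :=
  calc ρ s * ∑ h ∈ univ.filter (IsConj g), ρ h
      = ∑ h ∈ univ.filter (IsConj g), ρ (MulAut.conj s h) * ρ s := by
        simp only [mul_sum, ← map_mul, MulAut.conj_apply, inv_mul_cancel_right]
    _ = ∑ h ∈ univ.filter (IsConj g), ρ h * ρ s :=
        sum_equiv (MulAut.conj s).toEquiv (fun h => by
          have hconj : IsConj h (s * h * s⁻¹) := isConj_iff.2 ⟨s, rfl⟩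
          simp only [mem_filter, mem_univ, true_and]
          exact ⟨fun hg => hg.trans hconj, fun hg => hg.trans hconj.symm⟩)
          (fun _ _ => rfl)
    _ = _ := (sum_mul _ _ _).symm

namespace FDRep

variable {k G : Type}

theorem nontrivial_of_simple [Field k] [Monoid G] (V : FDRep k G) [Simple V] : Nontrivial V := by
  by_contra h
  have : Subsingleton V := not_nontrivial_iff_subsingleton.mp h
  exact id_nonzero V <| Action.hom_ext _ _ <|
    FGModuleCat.hom_ext (LinearMap.ext fun _ => Subsingleton.elim _ _)

theorem exists_algebraMap_eq_of_commute [Field k] [IsAlgClosed k] [Monoid G] (V : FDRep k G)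
    [Simple V] (f : Module.End k V) (hf : ∀ g, Commute (V.ρ g) f) :
    ∃ c : k, algebraMap k _ c = f := by
  let φ : V ⟶ V := ⟨FGModuleCat.ofHom f, fun s => FGModuleCat.hom_ext (hf s).symm⟩
  obtain ⟨c, hc⟩ := endomorphism_simple_eq_smul_id k φ
  exact ⟨c, congrArg (fun f : V ⟶ V => f.hom.hom.hom) hc⟩

theorem trace_sum_filter_isConj [Field k] [Group G] [Fintype G] (V : FDRep k G) (g : G)
    [DecidablePred (IsConj g)] :
    LinearMap.trace k V (∑ h ∈ univ.filter (IsConj g), V.ρ h) =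
      #(univ.filter (IsConj g)) * V.character g := by
  rw [map_sum, sum_congr rfl fun h hh => ?_, sum_const, nsmul_eq_mul]
  obtain ⟨u, rfl⟩ := isConj_iff.1 (mem_filter.1 hh).2
  exact V.char_conj g u

end FDRep

/-- For an irreducible complex character `χ` of a finite group `G` and a conjugacy class
`K = g^G`, the number `|K| * χ g / χ 1` is an algebraic integer. -/
theorem class_size_mul_char_div_degree_isIntegral {G : Type} [Group G] [Fintype G]
    (χ : G → ℂ) (hχ : IsIrredChar G χ) (g : G) :
    IsIntegral ℤ ((Nat.card {h : G | IsConj g h} : ℂ) * χ g / χ 1) := by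
  classical
  obtain ⟨V, hV, rfl⟩ := hχ
  have := V.nontrivial_of_simple
  obtain ⟨c, hc⟩ := V.exists_algebraMap_eq_of_commute _ (V.ρ.commute_sum_filter_isConj g)
  have hc_int : IsIntegral ℤ c := by
    rw [← isIntegral_algebraMap_iff (algebraMap ℂ (Module.End ℂ V)).injective, hc]
    exact V.ρ.isIntegral_sum _
  have hdeg : V.character 1 ≠ 0 := by
    rw [FDRep.char_one]
    exact Nat.cast_ne_zero.2 Module.finrank_pos.ne'
  have htrace : c * V.character 1 = #(univ.filter (IsConj g)) * V.character g := by
    rw [← V.trace_sum_filter_isConj, ← hc, Module.algebraMap_end_eq_smul_id, map_smul,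
      LinearMap.trace_id, FDRep.char_one, smul_eq_mul]
  have hcard : Nat.card {h : G | IsConj g h} = #(univ.filter (IsConj g)) := by
    rw [Nat.card_eq_fintype_card, Fintype.card_subtype]
    rfl
  rwa [hcard, ← htrace, mul_div_cancel_right₀ _ hdeg]
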